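/- A unitary operator U on a Hilbert space H is almost periodic (every vector has relatively norm-compact orbit under {Uⁿ}) if and only if H is the closed linear span of the eigenvectors of U. -/

import Mathlib

/-!
Let `x ≠ 0` be orthogonal to every eigenvector of `U` and have relatively compact orbit. The
closed convex hull `S` of the rank-one operators `⟪u, ·⟫ u`, `u` in the closure of the forward
orbit of `x`, is a compact convex set of compact self-adjoint operators whose ranges are
orthogonal to the eigenvectors, and `0 ∉ S`. Conjugation by `U` maps `S` into itself, so by
Markov–Kakutani it fixes some `A ∈ S`, i.e. `A` commutes with `U`. An eigenspace of `A` for a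
nonzero eigenvalue is then finite dimensional and `U`-invariant, so it contains an eigenvector of
`U`: a contradiction. Conversely, eigenvectors have relatively compact orbits, and the vectors
with relatively compact orbit form a closed subspace.
-/

open Filter Set Topology InnerProductSpace Module.End
open scoped InnerProductSpace

theorem isCompact_closedConvexHull {E : Type*} [AddCommGroup E] [Module ℝ E] [UniformSpace E]
    [IsUniformAddGroup E] [LocallyConvexSpace ℝ E] [ContinuousSMul ℝ E] [CompleteSpace E]
    {s : Set E} (hs : IsCompact s) : IsCompact (closedConvexHull ℝ s) := by
  rw [closedConvexHull_eq_closure_convexHull]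
  exact hs.totallyBounded.convexHull.closure.isCompact_of_isClosed isClosed_closure

/-- The Markov–Kakutani fixed point theorem for a single continuous linear map. -/
theorem IsCompact.exists_isFixedPt_of_mapsTo {E : Type*} [NormedAddCommGroup E] [NormedSpace ℝ E]
    {S : Set E} (hS : IsCompact S) (hSc : Convex ℝ S) (hne : S.Nonempty)
    {Φ : E →L[ℝ] E} (hΦ : MapsTo Φ S S) : ∃ A ∈ S, Function.IsFixedPt Φ A := by
  obtain ⟨T, hT⟩ := hne
  have hiter : ∀ n, Φ^[n] T ∈ S := fun n => hΦ.iterate n hT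
  set a : ℕ → E := fun N => (N + 1 : ℝ)⁻¹ • ∑ n ∈ Finset.range (N + 1), Φ^[n] T
  have ha : ∀ N, a N ∈ S := fun N => by
    simpa [a, Finset.smul_sum] using hSc.sum_mem (t := Finset.range (N + 1))
      (w := fun _ => (N + 1 : ℝ)⁻¹) (fun _ _ => by positivity) (by simp; field_simp)
      (fun n _ => hiter n)
  have hstep : ∀ N, Φ (a N) - a N = (N + 1 : ℝ)⁻¹ • (Φ^[N + 1] T - T) := fun N => by
    simp only [a, map_smul, map_sum, ← smul_sub, ← Finset.sum_sub_distrib,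
      ← Function.iterate_succ_apply' Φ]
    rw [Finset.sum_range_sub (fun n => Φ^[n] T), Function.iterate_zero_apply]
  have hbdd : IsBoundedUnder (· ≤ ·) atTop fun N => ‖Φ^[N + 1] T - T‖ := by
    obtain ⟨R, hR⟩ := hS.isBounded.exists_norm_le
    exact isBoundedUnder_of ⟨R + R, fun N => (norm_sub_le _ _).trans
      (add_le_add (hR _ (hiter _)) (hR _ hT))⟩
  have hasymp : Tendsto (fun N => Φ (a N) - a N) atTop (𝓝 0) := by
    simp only [hstep, ← one_div]
    exact tendsto_one_div_add_atTop_nhds_zero_nat.zero_smul_isBoundedUnder_le hbdd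
  obtain ⟨A, hA, φ, hφ, hlim⟩ := hS.tendsto_subseq ha
  refine ⟨A, hA, eq_of_sub_eq_zero (tendsto_nhds_unique ?_ (hasymp.comp hφ.tendsto_atTop))⟩
  exact ((Φ.continuous.tendsto A).comp hlim).sub hlim

section Orbits

variable {ι 𝕜 E : Type*} [NontriviallyNormedField 𝕜] [NormedAddCommGroup E] [NormedSpace 𝕜 E]

theorem ContinuousLinearMap.pow_apply_of_apply_eq_smul {V : E →L[𝕜] E} {x : E} {z : 𝕜}
    (h : V x = z • x) (n : ℕ) : (V ^ n) x = z ^ n • x := by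
  induction n with
  | zero => simp
  | succ n ih =>
    rw [pow_succ', mul_apply_eq_comp, ih, map_smul, h, smul_smul, pow_succ]

def relativelyCompactOrbits (T : ι → E →L[𝕜] E) : Submodule 𝕜 E where
  carrier := {x | IsCompact (closure (range fun i => T i x))}
  zero_mem' := isCompact_singleton.closure_of_subset (range_subset_iff.2 fun i => map_zero (T i))
  add_mem' {x y} hx hy := (hx.add hy).closure_of_subset <| range_subset_iff.2 fun i =>
    (map_add (T i) x y).symm ▸ add_mem_add (subset_closure (mem_range_self i))
      (subset_closure (mem_range_self i))
  smul_mem' c x hx := (hx.image (continuous_const_smul c)).closure_of_subset <|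
    range_subset_iff.2 fun i =>
      ⟨T i x, subset_closure (mem_range_self i), (map_smul (T i) c x).symm⟩

theorem isClosed_relativelyCompactOrbits [CompleteSpace E] {T : ι → E →L[𝕜] E} {C : ℝ}
    (hT : ∀ i, ‖T i‖ ≤ C) : IsClosed (relativelyCompactOrbits T : Set E) := by
  refine isClosed_of_closure_subset fun x hx => ?_
  refine (TotallyBounded.closure ?_).isCompact_of_isClosed isClosed_closure
  refine Metric.totallyBounded_iff.2 fun ε hε => ?_
  obtain ⟨y, hy, hxy⟩ := Metric.mem_closure_iff.1 hx (ε / 2 / (|C| + 1)) (by positivity)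
  obtain ⟨t, ht, hcover⟩ := Metric.totallyBounded_iff.1
    ((IsCompact.totallyBounded hy).subset subset_closure) (ε / 2) (by positivity)
  refine ⟨t, ht, range_subset_iff.2 fun i => ?_⟩
  obtain ⟨s, hs, hys⟩ := mem_iUnion₂.1 (hcover (mem_range_self i))
  refine mem_iUnion₂.2 ⟨s, hs, ?_⟩
  have hTxy : dist (T i x) (T i y) < ε / 2 := calc
    dist (T i x) (T i y) = ‖T i (x - y)‖ := by rw [dist_eq_norm, map_sub]
    _ ≤ (|C| + 1) * dist x y := by
      rw [dist_eq_norm]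
      exact (T i).le_of_opNorm_le ((hT i).trans ((le_abs_self C).trans (le_add_of_nonneg_right
        zero_le_one))) _
    _ < (|C| + 1) * (ε / 2 / (|C| + 1)) := by gcongr
    _ = ε / 2 := by field_simp
  rw [Metric.mem_ball] at hys ⊢
  linarith [dist_triangle (T i x) (T i y) s]

theorem mem_relativelyCompactOrbits_of_apply_eq_smul [ProperSpace 𝕜] {T : ι → E →L[𝕜] E}
    {C : ℝ} (hT : ∀ i, ‖T i‖ ≤ C) {e : E} (he : e ≠ 0) {c : ι → 𝕜} (hc : ∀ i, T i e = c i • e) :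
    e ∈ relativelyCompactOrbits T := by
  have hcC : ∀ i, ‖c i‖ ≤ C := fun i => le_of_mul_le_mul_right
    (by rw [← norm_smul, ← hc]; exact (T i).le_of_opNorm_le (hT i) e) (norm_pos_iff.2 he)
  exact ((isCompact_closedBall 0 C).image (continuous_id.smul continuous_const)).closure_of_subset
    (range_subset_iff.2 fun i => ⟨c i, mem_closedBall_zero_iff.2 (hcC i), (hc i).symm⟩)

end Orbits

section Hilbert

variable {H : Type*} [NormedAddCommGroup H] [InnerProductSpace ℂ H]

theorem mem_orthogonal_span_iff {s : Set H} {v : H} :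
    v ∈ (Submodule.span ℂ s)ᗮ ↔ ∀ u ∈ s, ⟪u, v⟫_ℂ = 0 := by
  rw [← Submodule.span_singleton_le_iff_mem, ← Submodule.isOrtho_iff_le, Submodule.isOrtho_comm,
    Submodule.isOrtho_span]
  simp

theorem star_apply_eq_inv_smul_of_apply_eq_smul [CompleteSpace H] {V : H →L[ℂ] H}
    (hV : star V * V = 1) {x : H} {z : ℂ} (h : V x = z • x) : star V x = z⁻¹ • x := by
  have hx : z • star V x = x := by
    rw [← map_smul, ← h, ← mul_apply_eq_comp, hV, one_apply_eq_self]
  rcases eq_or_ne z 0 with rfl | hz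
  · rw [zero_smul] at hx
    simp [← hx]
  · calc star V x = z⁻¹ • z • star V x := by rw [smul_smul, inv_mul_cancel₀ hz, one_smul]
      _ = z⁻¹ • x := by rw [hx]

theorem Unitary.coe_zpow_apply_of_apply_eq_smul [CompleteSpace H] (U : unitary (H →L[ℂ] H))
    {x : H} {z : ℂ} (h : (U : H →L[ℂ] H) x = z • x) (n : ℤ) :
    ((U ^ n : unitary (H →L[ℂ] H)) : H →L[ℂ] H) x = z ^ n • x := by
  cases n with
  | ofNat m => simpa using ContinuousLinearMap.pow_apply_of_apply_eq_smul h m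
  | negSucc m =>
    rw [zpow_negSucc, ← Unitary.star_eq_inv, Unitary.coe_star, SubmonoidClass.coe_pow, star_pow,
      zpow_negSucc, ← inv_pow]
    exact ContinuousLinearMap.pow_apply_of_apply_eq_smul
      (star_apply_eq_inv_smul_of_apply_eq_smul (Unitary.coe_star_mul_self U) h) _

theorem apply_mem_orthogonal_span_eigenvectors [CompleteSpace H] {V : H →L[ℂ] H}
    (hV : star V * V = 1) {w : H}
    (hw : w ∈ (Submodule.span ℂ {x : H | ∃ z : ℂ, x ≠ 0 ∧ V x = z • x})ᗮ) :
    V w ∈ (Submodule.span ℂ {x : H | ∃ z : ℂ, x ≠ 0 ∧ V x = z • x})ᗮ := by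
  rw [mem_orthogonal_span_iff] at hw ⊢
  rintro u ⟨z, hu0, hz⟩
  rw [← ContinuousLinearMap.adjoint_inner_left, ← ContinuousLinearMap.star_eq_adjoint,
    star_apply_eq_inv_smul_of_apply_eq_smul hV hz, inner_smul_left, hw u ⟨z, hu0, hz⟩, mul_zero]

end Hilbert

section RankOneHull

variable {H : Type*} [NormedAddCommGroup H] [InnerProductSpace ℂ H] {K : Set H} {T : H →L[ℂ] H}

noncomputable def rankOneHull (K : Set H) : Set (H →L[ℂ] H) :=
  closedConvexHull ℝ ((fun u => rankOne ℂ u u) '' K)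

theorem continuous_rankOne_self : Continuous fun u : H => rankOne ℂ u u := by
  simp_rw [rankOne_def']
  exact (ContinuousLinearMap.toSpanSingletonCLE (𝕜 := ℂ)).continuous.clm_comp
    (innerSL ℂ).continuous

theorem isCompact_rankOneHull [CompleteSpace H] (hK : IsCompact K) :
    IsCompact (rankOneHull K) :=
  isCompact_closedConvexHull (hK.image continuous_rankOne_self)

theorem isCompactOperator_rankOne_self (u : H) : IsCompactOperator (rankOne ℂ u u) :=
  (isCompactOperator_of_locallyCompactSpace_dom (innerSL ℂ u)).clm_comp
    (ContinuousLinearMap.toSpanSingleton ℂ u)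

theorem isCompactOperator_of_mem_rankOneHull [CompleteSpace H] (hT : T ∈ rankOneHull K) :
    IsCompactOperator T := by
  refine closedConvexHull_min ?_ ?_ isClosed_setOfPred_isCompactOperator hT
  · exact image_subset_iff.2 fun u _ => isCompactOperator_rankOne_self u
  · intro S hS R hR a b _ _ _
    exact (hS.smul a).add (hR.smul b)

theorem isSelfAdjoint_of_mem_rankOneHull [CompleteSpace H] (hT : T ∈ rankOneHull K) :
    IsSelfAdjoint T := by
  refine closedConvexHull_min ?_ ?_ (isClosed_eq continuous_star continuous_id) hT
  · exact image_subset_iff.2 fun u _ => by simp [ContinuousLinearMap.star_eq_adjoint]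
  · intro S hS R hR a b _ _ _
    exact ((IsSelfAdjoint.all a).smul hS).add ((IsSelfAdjoint.all b).smul hR)

theorem apply_mem_of_mem_rankOneHull {W : Submodule ℂ H} (hW : IsClosed (W : Set H))
    (hKW : K ⊆ W) (hT : T ∈ rankOneHull K) (y : H) : T y ∈ W := by
  suffices rankOneHull K ⊆ ⋂ y, {S : H →L[ℂ] H | S y ∈ W} from mem_iInter.1 (this hT) y
  refine closedConvexHull_min ?_ ?_ (isClosed_iInter fun y => hW.preimage (by fun_prop))
  · exact image_subset_iff.2 fun u hu => mem_iInter.2 fun y => W.smul_mem _ (hKW hu)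
  · refine convex_iInter fun y S hS R hR a b _ _ _ => ?_
    exact W.add_mem (W.smul_of_tower_mem a hS) (W.smul_of_tower_mem b hR)

theorem re_inner_rankOne_self_apply (u v : H) :
    (⟪u, rankOne ℂ v v u⟫_ℂ).re = ‖⟪u, v⟫_ℂ‖ ^ 2 := by
  rw [inner_right_rankOne_apply, ← inner_conj_symm v u, RCLike.mul_conj]
  norm_cast

theorem ne_zero_of_mem_rankOneHull (hK : IsCompact K) (hK0 : (0 : H) ∉ K)
    (hT : T ∈ rankOneHull K) : T ≠ 0 := by
  -- Testing against finitely many `u` such that every `v ∈ K` has some `⟪u, v⟫ ≠ 0` gives a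
  -- continuous linear functional that is bounded below by a positive constant on the hull.
  obtain ⟨t, -, hcover⟩ := hK.elim_nhds_subcover (fun u => {v : H | ⟪u, v⟫_ℂ ≠ 0}) fun u hu =>
    (isOpen_ne_fun (by fun_prop) continuous_const).mem_nhds
      (inner_self_ne_zero.2 (ne_of_mem_of_not_mem hu hK0))
  let g : H → ℝ := fun v => ∑ u ∈ t, ‖⟪u, v⟫_ℂ‖ ^ 2
  have hg : ∀ v ∈ K, 0 < g v := fun v hv => by
    obtain ⟨u, hut, huv⟩ := mem_iUnion₂.1 (hcover hv)
    exact Finset.sum_pos' (fun _ _ => by positivity) ⟨u, hut, pow_pos (norm_pos_iff.2 huv) 2⟩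
  rcases K.eq_empty_or_nonempty with rfl | hne
  · rw [rankOneHull, image_empty] at hT
    simpa using closedConvexHull_min subset_rfl convex_empty isClosed_empty hT
  obtain ⟨v₀, hv₀, hmin⟩ := hK.exists_isMinOn hne (by fun_prop : Continuous g).continuousOn
  let f : (H →L[ℂ] H) →L[ℝ] ℝ := ∑ u ∈ t, Complex.reCLM ∘L
    ((innerSL ℂ u).comp (ContinuousLinearMap.apply ℂ H u)).restrictScalars ℝ
  have hf : ∀ S, f S = ∑ u ∈ t, (⟪u, S u⟫_ℂ).re := fun S => by simp [f]
  have hδ : rankOneHull K ⊆ {S | g v₀ ≤ f S} := by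
    refine closedConvexHull_min ?_ (convex_halfSpace_ge f.toLinearMap.isLinear _)
      (isClosed_le continuous_const f.continuous)
    refine image_subset_iff.2 fun v hv => ?_
    simp only [mem_preimage, mem_ofPred_eq, hf, re_inner_rankOne_self_apply]
    exact hmin hv
  rintro rfl
  have := hδ hT
  simp only [mem_ofPred_eq, map_zero] at this
  linarith [hg v₀ hv₀]

theorem mapsTo_mulLeftRight_rankOneHull [CompleteSpace H] {V : H →L[ℂ] H} (hVK : MapsTo V K K) :
    MapsTo (ContinuousLinearMap.mulLeftRight ℝ (H →L[ℂ] H) V (star V))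
      (rankOneHull K) (rankOneHull K) := by
  set Φ := ContinuousLinearMap.mulLeftRight ℝ (H →L[ℂ] H) V (star V)
  refine fun T hT => closedConvexHull_min (t := Φ ⁻¹' rankOneHull K) ?_
    (convex_closedConvexHull.linear_preimage Φ.toLinearMap)
    (isClosed_closedConvexHull.preimage Φ.continuous) hT
  refine image_subset_iff.2 fun u hu => subset_closedConvexHull ⟨V u, hVK hu, ?_⟩
  simp only [Φ, ContinuousLinearMap.mulLeftRight_apply, ContinuousLinearMap.mul_def,
    ContinuousLinearMap.star_eq_adjoint, comp_rankOne, rankOne_comp,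
    ContinuousLinearMap.adjoint_adjoint]

end RankOneHull

section Eigenvectors

variable {H : Type*} [NormedAddCommGroup H] [InnerProductSpace ℂ H] [CompleteSpace H]

theorem exists_eigenvector_mem_range_of_commute {A V : H →L[ℂ] H} (hA : IsCompactOperator A)
    (hAsa : IsSelfAdjoint A) (hA0 : A ≠ 0) (hVA : Commute V A) :
    ∃ w ∈ range A, w ≠ 0 ∧ ∃ z : ℂ, V w = z • w := by
  obtain ⟨μ, hμ, hμ0⟩ : ∃ μ, HasEigenvalue (A : Module.End ℂ H) μ ∧ μ ≠ 0 := by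
    by_contra! h
    exact hA0 ((ContinuousLinearMap.eq_zero_of_forall_hasEigenvalue_eq_zero hA
      (ContinuousLinearMap.isSelfAdjoint_iff_isSymmetric.mp hAsa)).1 h)
  have := ContinuousLinearMap.finite_dimensional_eigenspace hA μ hμ0
  have : Nontrivial (eigenspace (A : Module.End ℂ H) μ) := Submodule.nontrivial_iff_ne_bot.2 hμ
  have hVE : ∀ w ∈ eigenspace (A : Module.End ℂ H) μ, V w ∈ eigenspace (A : Module.End ℂ H) μ := by
    intro w hw
    rw [mem_eigenspace_iff] at hw ⊢
    simp only [ContinuousLinearMap.coe_coe] at hw ⊢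
    rw [← show V (A w) = A (V w) from DFunLike.congr_fun hVA.eq w, hw, map_smul]
  obtain ⟨z, hz⟩ := exists_eigenvalue ((V : Module.End ℂ H).restrict hVE)
  obtain ⟨⟨w, hwE⟩, hw, hw0⟩ := hz.exists_hasEigenvector
  have hAw : A w = μ • w := mem_eigenspace_iff.1 hwE
  refine ⟨w, ⟨μ⁻¹ • w, ?_⟩, by simpa using hw0, z, ?_⟩
  · simp [hAw, smul_smul, inv_mul_cancel₀ hμ0]
  · simpa [Subtype.ext_iff] using mem_eigenspace_iff.1 hw

theorem exists_eigenvector_mem_of_isCompact_closure_orbit {V : H →L[ℂ] H} (hV : star V * V = 1)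
    {W : Submodule ℂ H} (hW : IsClosed (W : Set H)) (hVW : ∀ w ∈ W, V w ∈ W) {x : H}
    (hxW : x ∈ W) (hx : x ≠ 0) (hK : IsCompact (closure (range fun n : ℕ => (V ^ n) x))) :
    ∃ w ∈ W, w ≠ 0 ∧ ∃ z : ℂ, V w = z • w := by
  set K := closure (range fun n : ℕ => (V ^ n) x)
  have hnorm : ∀ y, ‖V y‖ = ‖y‖ := V.norm_map_iff_adjoint_comp_self.2 <| by
    rwa [← ContinuousLinearMap.star_eq_adjoint, ← ContinuousLinearMap.mul_def]
  have horbit : ∀ n : ℕ, (V ^ n) x ∈ W ∧ ‖(V ^ n) x‖ = ‖x‖ := by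
    intro n
    induction n with
    | zero => simpa using hxW
    | succ n ih => rw [pow_succ', mul_apply_eq_comp, hnorm]; exact ⟨hVW _ ih.1, ih.2⟩
  have hKW : K ⊆ W := closure_minimal (range_subset_iff.2 fun n => (horbit n).1) hW
  have hK0 : (0 : H) ∉ K := fun h0 => hx <| by
    simpa [eq_comm] using closure_minimal (range_subset_iff.2 fun n =>
      mem_sphere_zero_iff_norm.2 (horbit n).2) Metric.isClosed_sphere h0
  have hVK : MapsTo V K K := MapsTo.closure (fun _ ⟨n, hn⟩ => ⟨n + 1, by
    simp only [← hn, pow_succ', mul_apply_eq_comp]⟩) V.continuous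
  obtain ⟨A, hA, hfix⟩ := (isCompact_rankOneHull hK).exists_isFixedPt_of_mapsTo
    convex_closedConvexHull ⟨_, subset_closedConvexHull (mem_image_of_mem _ (subset_closure
      (mem_range_self 0)))⟩ (mapsTo_mulLeftRight_rankOneHull hVK)
  have hconj : V * A * star V = A := hfix
  have hcomm : Commute V A := calc
    V * A = V * A * star V * V := by rw [mul_assoc _ (star V), hV, mul_one]
    _ = A * V := by rw [hconj]
  obtain ⟨_, ⟨y, rfl⟩, hw0, z, hz⟩ := exists_eigenvector_mem_range_of_commute
    (isCompactOperator_of_mem_rankOneHull hA) (isSelfAdjoint_of_mem_rankOneHull hA)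
    (ne_zero_of_mem_rankOneHull hK hK0 hA) hcomm
  exact ⟨A y, apply_mem_of_mem_rankOneHull hW hKW hA y, hw0, z, hz⟩

theorem topologicalClosure_span_eigenvectors_eq_top {V : H →L[ℂ] H} (hV : star V * V = 1)
    (h : ∀ x, IsCompact (closure (range fun n : ℕ => (V ^ n) x))) :
    (Submodule.span ℂ {x : H | ∃ z : ℂ, x ≠ 0 ∧ V x = z • x}).topologicalClosure = ⊤ := by
  rw [Submodule.topologicalClosure_eq_top_iff, Submodule.eq_bot_iff]
  refine fun x hx => by_contra fun hx0 => ?_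
  obtain ⟨w, hwW, hw0, z, hz⟩ := exists_eigenvector_mem_of_isCompact_closure_orbit hV
    (Submodule.isClosed_orthogonal _) (fun _ => apply_mem_orthogonal_span_eigenvectors hV) hx hx0
    (h x)
  exact hw0 (inner_self_eq_zero.1 (mem_orthogonal_span_iff.1 hwW w ⟨z, hw0, hz⟩))

end Eigenvectors

/-- A unitary `U` is almost periodic (every vector has relatively norm-compact orbit under the
powers `Uⁿ`, `n ∈ ℤ`) if and only if `H` is the closed linear span of the eigenvectors of `U`. -/
theorem almost_periodic_iff_span_eigenvectors
    {H : Type*} [NormedAddCommGroup H] [InnerProductSpace ℂ H] [CompleteSpace H]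
    (U : unitary (H →L[ℂ] H)) :
    (∀ x : H, IsCompact (closure {y : H | ∃ n : ℤ, y = ((U ^ n : unitary (H →L[ℂ] H)) : H →L[ℂ] H) x})) ↔
      (Submodule.span ℂ {x : H | ∃ z : ℂ, x ≠ 0 ∧ (U : H →L[ℂ] H) x = z • x}).topologicalClosure = ⊤ := by
  set T : ℤ → H →L[ℂ] H := fun n => ((U ^ n : unitary (H →L[ℂ] H)) : H →L[ℂ] H)
  have horbit : ∀ x, {y : H | ∃ n : ℤ, y = ((U ^ n : unitary (H →L[ℂ] H)) : H →L[ℂ] H) x} =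
      range fun n => T n x := fun x => by
    ext; simp [T, eq_comm]
  have hT : ∀ n, ‖T n‖ ≤ 1 := fun n => by
    nontriviality H →L[ℂ] H
    exact (CStarRing.norm_coe_unitary _).le
  simp only [horbit]
  constructor
  · exact fun hAP => topologicalClosure_span_eigenvectors_eq_top (Unitary.coe_star_mul_self U)
      fun x => (hAP x).closure_of_subset <| range_subset_iff.2 fun n =>
        subset_closure ⟨n, by simp [T, SubmonoidClass.coe_pow]⟩
  · intro hspan x
    have hle : Submodule.span ℂ {x : H | ∃ z : ℂ, x ≠ 0 ∧ (U : H →L[ℂ] H) x = z • x} ≤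
        relativelyCompactOrbits T := Submodule.span_le.2 fun e ⟨z, he, hez⟩ =>
      mem_relativelyCompactOrbits_of_apply_eq_smul hT he
        (Unitary.coe_zpow_apply_of_apply_eq_smul U hez)
    have := Submodule.topologicalClosure_minimal _ hle (isClosed_relativelyCompactOrbits hT)
    rw [hspan] at this
    exact this Submodule.mem_top
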